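/- arXiv:1410.8096 — 5 statements merged into one kernel-verified Lean document; each statement's English description precedes it below -/
import Mathlib

section
/- Let φ : M → {normal subgroups of G} be a filter of the group G. Then the derived function ∂φ is again a filter of G: for every m ∈ M the subgroup ∂φ_m is normal in G, for all m, n ∈ M one has [∂φ_m, ∂φ_n] ≤ ∂φ_{m+n}, and m ≼ n implies ∂φ_n ≤ ∂φ_m. -/
/-!
For a normal subgroup `N`, `⁅K, H⁆ ≤ N` says that `K` centralizes `H` modulo `N`; this is a
condition on `K` of the form `K ≤ C`, so it passes to joins in either argument. Hence
`⁅∂φ m, ∂φ n⁆ ≤ ∂φ (m + n)` reduces to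
`⁅φ (m + s), φ (n + t)⁆ ≤ φ (m + s + (n + t)) ≤ φ (m + n + s)` for `s, t ≠ 0`,
using `m + n + s ≤ m + n + s + t = (m + s) + (n + t)`.
-/

namespace Subgroup

variable {G : Type*} [Group G]

theorem commutator_le_iff_le_comap_centralizer (H K N : Subgroup G) [N.Normal] :
    ⁅K, H⁆ ≤ N ↔
      K ≤ (centralizer (H.map (QuotientGroup.mk' N) : Set (G ⧸ N))).comap
        (QuotientGroup.mk' N) := by
  rw [← map_le_iff_le_comap, ← commutator_eq_bot_iff_le_centralizer, ← map_commutator,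
    map_eq_bot_iff, QuotientGroup.ker_mk']

theorem iSup_commutator_le_iff {ι : Sort*} (K : ι → Subgroup G) (H N : Subgroup G) [N.Normal] :
    ⁅⨆ i, K i, H⁆ ≤ N ↔ ∀ i, ⁅K i, H⁆ ≤ N := by
  simp only [commutator_le_iff_le_comap_centralizer H _ N, iSup_le_iff]

theorem commutator_iSup_le_iff {ι : Sort*} (H : Subgroup G) (K : ι → Subgroup G)
    (N : Subgroup G) [N.Normal] : ⁅H, ⨆ i, K i⁆ ≤ N ↔ ∀ i, ⁅H, K i⁆ ≤ N := by
  simp only [commutator_comm H, iSup_commutator_le_iff]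

variable {M : Type*}

structure IsFilter [Add M] [Preorder M] (φ : M → Subgroup G) : Prop where
  normal : ∀ m, (φ m).Normal
  commutator_le : ∀ m n, ⁅φ m, φ n⁆ ≤ φ (m + n)
  antitone : Antitone φ

def derived [Add M] [Zero M] (φ : M → Subgroup G) (m : M) : Subgroup G :=
  ⨆ s ∈ {s : M | s ≠ 0}, φ (m + s)

theorem le_derived [Add M] [Zero M] (φ : M → Subgroup G) (m : M) {s : M} (hs : s ≠ 0) :
    φ (m + s) ≤ derived φ m :=
  le_biSup (fun s => φ (m + s)) hs

theorem derived_normal [Add M] [Zero M] {φ : M → Subgroup G} (hφ : ∀ m, (φ m).Normal)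
    (m : M) : (derived φ m).Normal :=
  biSup_normal _ _ fun s _ => hφ (m + s)

theorem derived_antitone [Add M] [Zero M] [Preorder M] {φ : M → Subgroup G} (hφ : Antitone φ)
    (hadd : ∀ m n s : M, m ≤ n → m + s ≤ n + s) : Antitone (derived φ) :=
  fun _ _ hmn => iSup₂_le fun s hs => (hφ (hadd _ _ s hmn)).trans (le_derived φ _ hs)

theorem IsFilter.commutator_derived_le [AddCommMonoid M] [Preorder M] {φ : M → Subgroup G}
    (hφ : IsFilter φ) (hself : ∀ m s : M, m ≤ m + s) (m n : M) :
    ⁅derived φ m, derived φ n⁆ ≤ derived φ (m + n) := by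
  have := derived_normal hφ.normal (m + n)
  show ⁅⨆ s ∈ {s : M | s ≠ 0}, φ (m + s), ⨆ t ∈ {t : M | t ≠ 0}, φ (n + t)⁆ ≤ _
  simp only [iSup_commutator_le_iff, commutator_iSup_le_iff]
  intro t _ s hs
  have hindex : m + n + s ≤ m + s + (n + t) :=
    (hself (m + n + s) t).trans_eq (by abel)
  exact (hφ.commutator_le _ _).trans ((hφ.antitone hindex).trans (le_derived φ _ hs))

theorem IsFilter.derived [AddCommMonoid M] [Preorder M] {φ : M → Subgroup G} (hφ : IsFilter φ)
    (hadd : ∀ m n s : M, m ≤ n → m + s ≤ n + s) (hself : ∀ m s : M, m ≤ m + s) :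
    IsFilter (derived φ) where
  normal := derived_normal hφ.normal
  commutator_le := hφ.commutator_derived_le hself
  antitone := derived_antitone hφ.antitone hadd

end Subgroup

/-- Let `φ : M → {normal subgroups of G}` be a filter of the group `G`.
Then the derived function `∂φ`, `∂φ m = ⟨φ (m + s) : s ≠ 0⟩`, is again a filter of `G`:
each `∂φ m` is normal in `G`, `[∂φ m, ∂φ n] ≤ ∂φ (m + n)` for all `m n`, and
`m ≼ n` implies `∂φ n ≤ ∂φ m`. -/
theorem derived_is_filter {G : Type*} [Group G] {M : Type*} [AddCommMonoid M] [Preorder M]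
    (hcompat : ∀ k l m n : M, k ≤ l → m ≤ n → k + m ≤ l + n)
    (hself : ∀ m s : M, m ≤ m + s)
    (φ : M → Subgroup G)
    (hnormal : ∀ m, (φ m).Normal)
    (hfilter : ∀ m n, ⁅φ m, φ n⁆ ≤ φ (m + n))
    (hmono : ∀ m n, m ≤ n → φ n ≤ φ m)
    (dφ : M → Subgroup G)
    (hdφ : ∀ m, dφ m = ⨆ s ∈ {s : M | s ≠ 0}, φ (m + s)) :
    (∀ m, (dφ m).Normal) ∧
    (∀ m n, ⁅dφ m, dφ n⁆ ≤ dφ (m + n)) ∧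
    (∀ m n, m ≤ n → dφ n ≤ dφ m) := by
  obtain rfl : dφ = Subgroup.derived φ := funext hdφ
  have hφ : Subgroup.IsFilter φ := ⟨hnormal, hfilter, hmono⟩
  have hdφ := hφ.derived (fun m n s h => hcompat m n s s h le_rfl) hself
  exact ⟨hdφ.normal, hdφ.commutator_le, hdφ.antitone⟩
end

section
/- Let ∘ : V × V → W be an R-bilinear map. If (f, g) ∈ Adj(∘) and (h, ĥ) ∈ PIsom(∘), then the pair (h ∘ f ∘ h⁻¹, h ∘ g ∘ h⁻¹) (composition of linear maps, h⁻¹ the inverse automorphism of h) again lies in Adj(∘). Moreover, for each fixed (h, ĥ) ∈ PIsom(∘), the map (f, g) ↦ (h ∘ f ∘ h⁻¹, h ∘ g ∘ h⁻¹) is a ring automorphism of Adj(∘); thus PIsom(∘) acts on Adj(∘) by ring automorphisms. -/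
/-!
Conjugation by `h` is already a ring automorphism of `End V` (and of its opposite), so the only
content is that it preserves adjointness: writing `u = h u₀`, `v = h v₀`, the pseudo-isometry
identity turns `B (h f u₀) (h v₀) = B (h u₀) (h g v₀)` into `ĥ` applied to
`B (f u₀) v₀ = B u₀ (g v₀)`; injectivity of `ĥ` gives the converse, hence bijectivity.
-/

namespace LinearMap

variable {R V V' W W' : Type*} [CommSemiring R]
  [AddCommMonoid V] [AddCommMonoid V'] [AddCommMonoid W] [AddCommMonoid W']
  [Module R V] [Module R V'] [Module R W] [Module R W']
  {B : V →ₗ[R] V →ₗ[R] W} {B' : V' →ₗ[R] V' →ₗ[R] W'}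
  {h : V ≃ₗ[R] V'} {hW : W → W'} {f g : Module.End R V}

theorem IsAdjointPair.conj (hB : ∀ u v, B' (h u) (h v) = hW (B u v))
    (hfg : IsAdjointPair B B f g) : IsAdjointPair B' B' (h.conj f) (h.conj g) := by
  intro u v
  obtain ⟨u, rfl⟩ := h.surjective u
  obtain ⟨v, rfl⟩ := h.surjective v
  simp only [LinearEquiv.conj_apply_apply, LinearEquiv.symm_apply_apply, hB, hfg u v]

theorem isAdjointPair_conj_iff (hW_inj : Function.Injective hW)
    (hB : ∀ u v, B' (h u) (h v) = hW (B u v)) :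
    IsAdjointPair B' B' (h.conj f) (h.conj g) ↔ IsAdjointPair B B f g := by
  refine ⟨fun hconj u v => hW_inj ?_, IsAdjointPair.conj hB⟩
  simpa only [LinearEquiv.conj_apply_apply, LinearEquiv.symm_apply_apply, hB] using
    hconj (h u) (h v)

end LinearMap

/-- Let `∘ : V × V → W` be an `R`-bilinear map, with adjoint ring
`Adj(∘) = {(f,g) : f u ∘ v = u ∘ g v}` (multiplication `(f,g)·(f',g') = (f ∘ f', g' ∘ g)`)
and pseudo-isometry group `PIsom(∘) = {(h,hW) : h u ∘ h v = hW (u ∘ v)}`.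
If `(f,g) ∈ Adj(∘)` and `(h,hW) ∈ PIsom(∘)`, then `(h f h⁻¹, h g h⁻¹) ∈ Adj(∘)`; moreover,
for fixed `(h,hW)` the map `(f,g) ↦ (h f h⁻¹, h g h⁻¹)` is a ring automorphism of `Adj(∘)`:
it is a bijection of `Adj(∘)` onto itself which preserves addition, the multiplicative
identity `(id, id)`, and the multiplication `(f,g)·(f',g') = (f ∘ f', g' ∘ g)`. -/
theorem pseudo_isometries_act_on_adjoint_ring {R : Type*} [CommRing R]
    {V W : Type*} [AddCommGroup V] [AddCommGroup W] [Module R V] [Module R W]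
    (B : V →ₗ[R] V →ₗ[R] W)
    (Adj : Set ((V →ₗ[R] V) × (V →ₗ[R] V)))
    (hAdj : Adj = {fg | ∀ u v : V, B (fg.1 u) v = B u (fg.2 v)})
    (h : V ≃ₗ[R] V) (hW : W ≃ₗ[R] W)
    (hPIsom : ∀ u v : V, B (h u) (h v) = hW (B u v))
    (C : (V →ₗ[R] V) × (V →ₗ[R] V) → (V →ₗ[R] V) × (V →ₗ[R] V))
    (hC : C = fun fg => (h.toLinearMap ∘ₗ fg.1 ∘ₗ h.symm.toLinearMap,
                         h.toLinearMap ∘ₗ fg.2 ∘ₗ h.symm.toLinearMap)) :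
    (∀ fg ∈ Adj, C fg ∈ Adj) ∧
    Set.BijOn C Adj Adj ∧
    (∀ fg fg' : (V →ₗ[R] V) × (V →ₗ[R] V), C (fg + fg') = C fg + C fg') ∧
    C (LinearMap.id, LinearMap.id) = (LinearMap.id, LinearMap.id) ∧
    (∀ fg fg' : (V →ₗ[R] V) × (V →ₗ[R] V),
      C (fg.1 ∘ₗ fg'.1, fg'.2 ∘ₗ fg.2) = ((C fg).1 ∘ₗ (C fg').1, (C fg').2 ∘ₗ (C fg).2)) := by
  obtain rfl : C = ⇑(h.conj.toEquiv.prodCongr h.conj.toEquiv) := hC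
  have mem_iff : ∀ fg, h.conj.toEquiv.prodCongr h.conj.toEquiv fg ∈ Adj ↔ fg ∈ Adj := by
    subst hAdj
    exact fun fg => LinearMap.isAdjointPair_conj_iff hW.injective hPIsom
  refine ⟨fun fg hfg => (mem_iff fg).2 hfg, Equiv.bijOn _ mem_iff, fun fg fg' => ?_, ?_,
    fun fg fg' => ?_⟩
  · exact Prod.ext (map_add h.conj _ _) (map_add h.conj _ _)
  · exact Prod.ext h.conj_id h.conj_id
  · exact Prod.ext (h.conj_comp _ _) (h.conj_comp _ _)
end

section
/- Let p be a prime, n ≥ 2, and let U be the group of upper unitriangular n × n matrices over Z/pZ (upper triangular matrices with all diagonal entries equal to 1). For every m ≥ 1, the m-th term of the lower central series of U is γ_m(U) = {A ∈ U : A_{ij} = 0 for all indices i < j with j − i < m}. In particular γ_1(U) = U and γ_2(U) is the set of unitriangular matrices whose first superdiagonal vanishes. -/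
open Matrix

/-- The group of upper unitriangular `n × n` matrices over `ℤ/pℤ`, as a subgroup of the
units of the matrix ring: upper triangular matrices all of whose diagonal entries are `1`. -/
def UT (p n : ℕ) [Fact p.Prime] : Subgroup (Matrix (Fin n) (Fin n) (ZMod p))ˣ where
  carrier := {A | (∀ i j : Fin n, j < i → (A : Matrix (Fin n) (Fin n) (ZMod p)) i j = 0) ∧
                  ∀ i : Fin n, (A : Matrix (Fin n) (Fin n) (ZMod p)) i i = 1}
  one_mem' := by
    refine ⟨fun i j hij => ?_, fun i => ?_⟩
    · simp [Matrix.one_apply, (ne_of_lt hij).symm]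
    · simp
  mul_mem' := by
    rintro A B ⟨hA0, hA1⟩ ⟨hB0, hB1⟩
    refine ⟨fun i j hij => ?_, fun i => ?_⟩
    · show (A.val * B.val) i j = 0
      rw [Matrix.mul_apply]
      refine Finset.sum_eq_zero fun k _ => ?_
      rcases lt_or_ge k i with h | h
      · rw [hA0 i k h, zero_mul]
      · rw [hB0 k j (lt_of_lt_of_le hij h), mul_zero]
    · show (A.val * B.val) i i = 1
      rw [Matrix.mul_apply, Finset.sum_eq_single i]
      · rw [hA1, hB1, one_mul]
      · intro k _ hk
        rcases lt_or_gt_of_ne hk with h | h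
        · rw [hA0 i k h, zero_mul]
        · rw [hB0 k i h, mul_zero]
      · exact fun h => absurd (Finset.mem_univ i) h
  inv_mem' := by
    rintro A ⟨hA0, hA1⟩
    have hBT : (A : Matrix (Fin n) (Fin n) (ZMod p)).BlockTriangular id :=
      fun i j hij => hA0 i j hij
    have hInv : Invertible (A : Matrix (Fin n) (Fin n) (ZMod p)) := A.invertible
    have hBTinv : ((A : Matrix (Fin n) (Fin n) (ZMod p))⁻¹).BlockTriangular id :=
      Matrix.blockTriangular_inv_of_blockTriangular hBT
    have hval : ((A⁻¹ : (Matrix (Fin n) (Fin n) (ZMod p))ˣ) : Matrix (Fin n) (Fin n) (ZMod p))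
        = (A : Matrix (Fin n) (Fin n) (ZMod p))⁻¹ := Matrix.coe_units_inv A
    refine ⟨fun i j hij => ?_, fun i => ?_⟩
    · rw [hval]; exact hBTinv (show (id j : Fin n) < id i from hij)
    · rw [hval]
      have hmul : (A : Matrix (Fin n) (Fin n) (ZMod p))⁻¹ * (A : Matrix (Fin n) (Fin n) (ZMod p)) = 1 :=
        Matrix.nonsing_inv_mul _ ((Matrix.isUnit_iff_isUnit_det _).mp A.isUnit)
      have := congrFun (congrFun hmul i) i
      rw [Matrix.mul_apply, Finset.sum_eq_single i] at this
      · rwa [hA1 i, mul_one, Matrix.one_apply_eq] at this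
      · intro k _ hk
        rcases lt_or_gt_of_ne hk with h | h
        · exact mul_eq_zero_of_left (hBTinv (show (id k : Fin n) < id i from h)) _
        · exact mul_eq_zero_of_right _ (hA0 k i h)
      · exact fun h => absurd (Finset.mem_univ i) h

/-!
Let `Uᵣ` be the unitriangular matrices `x` for which `x - 1` vanishes below the `r`-th
superdiagonal. Products of matrices supported `r` and `s` steps above the diagonal are supported
`r + s` steps above it, and `⁅x, y⁆ - 1 = ((x - 1)(y - 1) - (y - 1)(x - 1)) x⁻¹ y⁻¹`, so
`⁅Uᵣ, Uₛ⁆ ≤ Uᵣ₊ₛ` and hence `γₘ ≤ Uₘ`. Conversely, `Uᵣ` is generated by the transvections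
`tᵢⱼ(c)` with `j - i ≥ r`: multiplying by `tᵢ,ᵢ₊ᵣ(-xᵢ,ᵢ₊ᵣ)` clears the entries of the `r`-th
superdiagonal one at a time and lands in `Uᵣ₊₁`. The relation `⁅tᵢₖ(c), tₖⱼ(d)⁆ = tᵢⱼ(cd)`
exhibits each such transvection with `r ≥ 2` as a commutator of an element of `Uᵣ₋₁` with an
element of `U`, so `Uₘ ≤ γₘ` by induction on `m`.
-/

open scoped commutatorElement

namespace Matrix

section SuperdiagFiltration

variable (R : Type*) [Ring R] (n : ℕ)

def superdiagFiltration (r : ℕ) : AddSubgroup (Matrix (Fin n) (Fin n) R) where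
  carrier := {X | ∀ i j : Fin n, (j : ℕ) < i + r → X i j = 0}
  add_mem' hX hY i j h := by simp [hX i j h, hY i j h]
  zero_mem' _ _ _ := rfl
  neg_mem' hX i j h := by simp [hX i j h]

variable {R n}

theorem superdiagFiltration_antitone : Antitone (superdiagFiltration R n) :=
  fun _ _ hrs _ hX i j h => hX i j (by omega)

theorem mul_mem_superdiagFiltration {r s : ℕ} {X Y : Matrix (Fin n) (Fin n) R}
    (hX : X ∈ superdiagFiltration R n r) (hY : Y ∈ superdiagFiltration R n s) :
    X * Y ∈ superdiagFiltration R n (r + s) := fun i j h => by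
  rw [mul_apply]
  refine Finset.sum_eq_zero fun k _ => ?_
  rcases lt_or_ge (k : ℕ) (i + r) with hk | hk
  · rw [hX i k hk, zero_mul]
  · rw [hY k j (by omega), mul_zero]

theorem single_mem_superdiagFiltration {r : ℕ} {i j : Fin n} (h : (i : ℕ) + r ≤ j) (c : R) :
    single i j c ∈ superdiagFiltration R n r :=
  fun _ _ hab => single_apply_of_ne _ _ _ _ _ fun ⟨hi, hj⟩ => by subst hi hj; omega

end SuperdiagFiltration

theorem transvection_commutator {R ι : Type*} [CommRing R] [Fintype ι] [DecidableEq ι]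
    {i j k : ι} (hij : i ≠ j) (hik : i ≠ k) (hkj : k ≠ j) (c d : R) :
    transvection i k c * transvection k j d * transvection i k (-c) * transvection k j (-d) =
      transvection i j (c * d) := by
  simp only [transvection, ← single_neg, add_mul, mul_add, mul_one, one_mul, mul_neg, neg_mul,
    single_mul_single_same, single_mul_single_of_ne _ _ _ _ hij.symm,
    single_mul_single_of_ne _ _ _ _ hik.symm, single_mul_single_of_ne _ _ _ _ hkj.symm,
    add_zero]
  abel

end Matrix

namespace UT

variable {p n : ℕ} [Fact p.Prime]

local notation "𝕄" => Matrix (Fin n) (Fin n) (ZMod p)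

instance : CoeOut (UT p n) 𝕄 := ⟨fun x => ((x : 𝕄ˣ) : 𝕄)⟩

theorem mem_iff_sub_one_mem {x : 𝕄ˣ} :
    x ∈ UT p n ↔ (x : 𝕄) - 1 ∈ superdiagFiltration (ZMod p) n 1 := by
  refine ⟨fun ⟨hlow, hdiag⟩ i j hji => ?_, fun h => ⟨fun i j hji => ?_, fun i => ?_⟩⟩
  · rcases (Nat.lt_succ_iff.mp hji).lt_or_eq with hlt | heq
    · rw [Matrix.sub_apply, hlow i j hlt, one_apply_ne (Fin.lt_def.mpr hlt).ne', sub_zero]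
    · rw [Fin.ext heq, Matrix.sub_apply, hdiag, one_apply_eq, sub_self]
  · simpa [one_apply_ne hji.ne'] using h i j (by omega)
  · simpa [sub_eq_zero] using h i i (by omega)

theorem coe_mul (a b : UT p n) : ((a * b : UT p n) : 𝕄) = a * b := rfl

theorem coe_one : ((1 : UT p n) : 𝕄) = 1 := rfl

theorem coe_inv_mul (a : UT p n) : ((a⁻¹ : UT p n) : 𝕄) * a = 1 := by
  rw [← coe_mul, inv_mul_cancel, coe_one]

theorem coe_mul_inv (a : UT p n) : (a : 𝕄) * (a⁻¹ : UT p n) = 1 := by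
  rw [← coe_mul, mul_inv_cancel, coe_one]

theorem coe_mem_superdiagFiltration_zero (a : UT p n) :
    (a : 𝕄) ∈ superdiagFiltration (ZMod p) n 0 :=
  fun i j h => a.2.1 i j (by omega)

variable (p n) in
def level (r : ℕ) : Subgroup (UT p n) where
  carrier := {x | (x : 𝕄) - 1 ∈ superdiagFiltration (ZMod p) n r}
  one_mem' := by simp
  mul_mem' {a b} ha hb := by
    have hab : ((a * b : UT p n) : 𝕄) - 1 =
        ((a : 𝕄) - 1) * ((b : 𝕄) - 1) + ((a : 𝕄) - 1) + ((b : 𝕄) - 1) := by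
      rw [coe_mul]; noncomm_ring
    change ((a * b : UT p n) : 𝕄) - 1 ∈ superdiagFiltration (ZMod p) n r
    rw [hab]
    exact add_mem (add_mem (superdiagFiltration_antitone (by omega)
      (mul_mem_superdiagFiltration ha hb)) ha) hb
  inv_mem' {a} ha := by
    have ha' : ((a⁻¹ : UT p n) : 𝕄) - 1 = -((a⁻¹ : UT p n) * ((a : 𝕄) - 1)) := by
      rw [mul_sub, coe_inv_mul, mul_one, neg_sub]
    change ((a⁻¹ : UT p n) : 𝕄) - 1 ∈ superdiagFiltration (ZMod p) n r
    rw [ha']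
    exact neg_mem (by simpa using
      mul_mem_superdiagFiltration (coe_mem_superdiagFiltration_zero a⁻¹) ha)

theorem mem_level_iff {r : ℕ} (x : UT p n) :
    x ∈ level p n r ↔ ∀ i j : Fin n, i < j → (j : ℕ) - (i : ℕ) < r → (x : 𝕄) i j = 0 := by
  have hx := mem_iff_sub_one_mem.mp x.2
  refine ⟨fun h i j hij hji => ?_, fun h i j hji => ?_⟩
  · simpa [one_apply_ne hij.ne] using h i j (by omega)
  · rcases lt_or_ge i j with hij | hji'
    · simp [h i j hij (by omega), one_apply_ne hij.ne]
    · exact hx i j (by omega)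

theorem level_one : level p n 1 = ⊤ :=
  eq_top_iff.mpr fun x _ => (mem_level_iff x).mpr fun _ _ _ _ => by omega

theorem level_eq_bot {r : ℕ} (h : n ≤ r) : level p n r = ⊥ :=
  eq_bot_iff.mpr fun x hx => Subgroup.mem_bot.mpr <|
    Subtype.ext <| Units.ext <| sub_eq_zero.mp <| Matrix.ext fun i j => hx i j (by omega)

theorem commutator_mem_level {r s : ℕ} {a b : UT p n} (ha : a ∈ level p n r)
    (hb : b ∈ level p n s) : ⁅a, b⁆ ∈ level p n (r + s) := by
  have hba : (b : 𝕄) * a * (a⁻¹ : UT p n) * (b⁻¹ : UT p n) = 1 := by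
    rw [mul_assoc (b : 𝕄), coe_mul_inv, mul_one, coe_mul_inv]
  have hcomm : ((⁅a, b⁆ : UT p n) : 𝕄) - 1 =
      ((a : 𝕄) * b - b * a) * (a⁻¹ : UT p n) * (b⁻¹ : UT p n) := by
    rw [commutatorElement_def, coe_mul, coe_mul, coe_mul, sub_mul, sub_mul, hba]
  have hab : (a : 𝕄) * b - b * a =
      ((a : 𝕄) - 1) * ((b : 𝕄) - 1) - ((b : 𝕄) - 1) * ((a : 𝕄) - 1) := by
    noncomm_ring
  have hlie : (a : 𝕄) * b - b * a ∈ superdiagFiltration (ZMod p) n (r + s) := by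
    rw [hab]
    exact sub_mem (mul_mem_superdiagFiltration ha hb)
      (add_comm s r ▸ mul_mem_superdiagFiltration hb ha)
  change _ ∈ superdiagFiltration (ZMod p) n (r + s)
  rw [hcomm]
  simpa using mul_mem_superdiagFiltration (mul_mem_superdiagFiltration hlie
    (coe_mem_superdiagFiltration_zero a⁻¹)) (coe_mem_superdiagFiltration_zero b⁻¹)

theorem lowerCentralSeries_le_level (k : ℕ) :
    (⊤ : Subgroup (UT p n)).lowerCentralSeries k ≤ level p n (k + 1) := by
  induction k with
  | zero => rw [level_one]; exact le_rfl
  | succ k ih =>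
    rw [Subgroup.lowerCentralSeries_succ, Subgroup.commutator_le]
    exact fun a ha b _ => commutator_mem_level (ih ha) (level_one (p := p) ▸ Subgroup.mem_top b)

def transvection {i j : Fin n} (h : i < j) (c : ZMod p) : UT p n :=
  ⟨⟨Matrix.transvection i j c, Matrix.transvection i j (-c),
      by rw [transvection_mul_transvection_same _ _ h.ne, add_neg_cancel, transvection_zero],
      by rw [transvection_mul_transvection_same _ _ h.ne, neg_add_cancel, transvection_zero]⟩,
    mem_iff_sub_one_mem.mpr <| by
      simpa [Matrix.transvection] using
        single_mem_superdiagFiltration (show (i : ℕ) + 1 ≤ j from h) c⟩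

theorem coe_transvection {i j : Fin n} (h : i < j) (c : ZMod p) :
    ((transvection h c : UT p n) : 𝕄) = Matrix.transvection i j c := rfl

theorem transvection_mem_level {r : ℕ} {i j : Fin n} (h : i < j) (c : ZMod p)
    (hr : r ≤ (j : ℕ) - i) : transvection h c ∈ level p n r := by
  change Matrix.transvection i j c - 1 ∈ superdiagFiltration (ZMod p) n r
  rw [Matrix.transvection, add_sub_cancel_left]
  exact single_mem_superdiagFiltration (by omega) c

theorem commutator_transvection {i k j : Fin n} (hik : i < k) (hkj : k < j) (c d : ZMod p) :
    ⁅transvection hik c, transvection hkj d⁆ = transvection (hik.trans hkj) (c * d) :=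
  Subtype.ext <| Units.ext <| Matrix.transvection_commutator (hik.trans hkj).ne hik.ne hkj.ne c d

theorem level_le_of_level_succ_le {H : Subgroup (UT p n)} {r : ℕ}
    (hsucc : level p n (r + 1) ≤ H)
    (htrans : ∀ (i j : Fin n) (hij : i < j), (j : ℕ) - i = r → ∀ c, transvection hij c ∈ H) :
    level p n r ≤ H := by
  suffices ∀ s : Finset (Fin n × Fin n), ∀ x ∈ level p n r,
      (∀ i j : Fin n, i < j → (j : ℕ) - i = r → (i, j) ∉ s → (x : 𝕄) i j = 0) → x ∈ H from
    fun x hx => this Finset.univ x hx fun _ _ _ _ h => absurd (Finset.mem_univ _) h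
  intro s
  induction s using Finset.induction_on with
  | empty =>
    intro x hx hzero
    refine hsucc ((mem_level_iff x).mpr fun i j hij hji => ?_)
    rcases (Nat.lt_succ_iff.mp hji).lt_or_eq with hlt | heq
    · exact (mem_level_iff x).mp hx i j hij hlt
    · exact hzero i j hij heq (Finset.notMem_empty _)
  | insert e s _ ih =>
    obtain ⟨i, j⟩ := e
    intro x hx hzero
    by_cases hdist : i < j ∧ (j : ℕ) - i = r
    · obtain ⟨hij, hji⟩ := hdist
      have hy : transvection hij (-(x : 𝕄) i j) * x ∈ H := by
        refine ih _ (mul_mem (transvection_mem_level hij _ hji.ge) hx) fun a b hab hba hs => ?_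
        rw [coe_mul, coe_transvection]
        by_cases ha : a = i
        · obtain rfl := ha
          obtain rfl : b = j := Fin.ext (by omega)
          rw [transvection_mul_apply_same, x.2.2 b, mul_one, add_neg_cancel]
        · rw [transvection_mul_apply_of_ne _ _ _ _ ha]
          exact hzero a b hab hba (by simp [ha, hs])
      simpa using H.mul_mem (H.inv_mem (htrans i j hij hji (-(x : 𝕄) i j))) hy
    · refine ih x hx fun a b hab hba hs => hzero a b hab hba fun h => ?_
      rcases Finset.mem_insert.mp h with h | h
      · obtain ⟨rfl, rfl⟩ := Prod.mk.inj h
        exact hdist ⟨hab, hba⟩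
      · exact hs h

theorem level_le_of_transvection_mem {H : Subgroup (UT p n)} {r : ℕ}
    (htrans : ∀ (i j : Fin n) (hij : i < j), r ≤ (j : ℕ) - i → ∀ c, transvection hij c ∈ H) :
    level p n r ≤ H :=
  Nat.decreasingInduction' (P := fun s => level p n s ≤ H)
    (fun s _ hrs ih => level_le_of_level_succ_le ih fun i j hij hji => htrans i j hij (hji ▸ hrs))
    (Nat.le_add_left r n) (by rw [level_eq_bot (Nat.le_add_right n r)]; exact bot_le)

theorem level_le_lowerCentralSeries (k : ℕ) :
    level p n (k + 1) ≤ (⊤ : Subgroup (UT p n)).lowerCentralSeries k := by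
  induction k with
  | zero => exact le_top
  | succ k ih =>
    refine level_le_of_transvection_mem fun i j hij hdist c => ?_
    let l : Fin n := ⟨j - 1, by omega⟩
    have hil : i < l := by simp only [l, Fin.lt_def]; omega
    have hlj : l < j := by simp only [l, Fin.lt_def]; omega
    rw [← mul_one c, ← commutator_transvection hil hlj]
    exact Subgroup.commutator_mem_commutator
      (ih (transvection_mem_level hil c (by simp only [l]; omega))) (Subgroup.mem_top _)

theorem lowerCentralSeries_eq_level (k : ℕ) :
    (⊤ : Subgroup (UT p n)).lowerCentralSeries k = level p n (k + 1) :=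
  le_antisymm (lowerCentralSeries_le_level k) (level_le_lowerCentralSeries k)

end UT

theorem lowerCentralSeries_unitriangular_general (p n : ℕ) [Fact p.Prime] :
    ∀ m : ℕ, 1 ≤ m → ∀ A : ↥(UT p n),
      A ∈ (⊤ : Subgroup ↥(UT p n)).lowerCentralSeries (m - 1) ↔
        ∀ i j : Fin n, i < j → (j : ℕ) - (i : ℕ) < m →
          ((A : (Matrix (Fin n) (Fin n) (ZMod p))ˣ) : Matrix (Fin n) (Fin n) (ZMod p)) i j = 0 := by
  intro m hm A
  obtain ⟨k, rfl⟩ := Nat.exists_eq_add_of_le' hm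
  rw [Nat.add_sub_cancel, UT.lowerCentralSeries_eq_level]
  exact UT.mem_level_iff A

/-- Let `p` be a prime, `n ≥ 2`, and let `U = UT(n, ℤ/pℤ)` be the group
of upper unitriangular `n × n` matrices over `ℤ/pℤ`.  For every `m ≥ 1`, the `m`-th term
`γ_m(U)` of the lower central series of `U` (here `γ_m(U) = lowerCentralSeries U (m - 1)`,
since Mathlib's lower central series starts with `lowerCentralSeries U 0 = U`) consists
exactly of those `A ∈ U` with `A i j = 0` for all indices `i < j` with `j − i < m`.
(In particular `γ₁(U) = U` and `γ₂(U)` is the set of unitriangular matrices whose first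
superdiagonal vanishes.) -/
theorem lowerCentralSeries_unitriangular (p n : ℕ) [Fact p.Prime] (hn : 2 ≤ n) :
    ∀ m : ℕ, 1 ≤ m → ∀ A : ↥(UT p n),
      A ∈ (⊤ : Subgroup ↥(UT p n)).lowerCentralSeries (m - 1) ↔
        ∀ i j : Fin n, i < j → (j : ℕ) - (i : ℕ) < m →
          ((A : (Matrix (Fin n) (Fin n) (ZMod p))ˣ) : Matrix (Fin n) (Fin n) (ZMod p)) i j = 0 :=
  lowerCentralSeries_unitriangular_general p n
end

section
/- Let p be a prime, d ≥ 3, and let B : Z_p^d × Z_p^d → Z_p^{d−1} be the bilinear map with B(u, v)_k = u_k v_{k+1} − u_{k+1} v_k. Then Adj(B) = {(D(w, x) + y·E_{21} + z·E_{d−1,d}, D(x, w) − y·E_{21} − z·E_{d−1,d}) : w, x, y, z ∈ Z_p}. In particular, Adj(B) is a 4-dimensional Z_p-vector space. -/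
/-!
Testing the adjoint identity on standard basis vectors `e_a, e_b` at a coordinate `k` yields linear
relations between entries of `f` and `g`. They kill every off-diagonal entry of `f` except the
`(2,1)` and `(d-1,d)` entries, whose counterparts in `g` are their negatives, and they give
`f_{kk} = g_{k+1,k+1}`. Since `B` is alternating, `(g, f)` is adjoint as well, so
`g_{kk} = f_{k+1,k+1}` and both diagonals alternate with period two. Conversely the four-parameter
pairs are adjoint by a coordinatewise computation, and the four parameters can be read off from `f`,
so `Adj(B) ≅ R⁴`.
-/

open Matrix

section

variable {R : Type*} [CommRing R] {d : ℕ}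

def consecutiveMinors (u v : Fin d → R) (k : Fin (d - 1)) : R :=
  u ⟨k, by omega⟩ * v ⟨k + 1, by omega⟩ - u ⟨k + 1, by omega⟩ * v ⟨k, by omega⟩

lemma consecutiveMinors_swap (u v : Fin d → R) :
    consecutiveMinors u v = -consecutiveMinors v u := by
  funext k
  simp only [consecutiveMinors, Pi.neg_apply]
  ring

def adjointPairs {ι κ : Type*} [Fintype ι] (B : (ι → R) → (ι → R) → κ → R) :
    Set (Matrix ι ι R × Matrix ι ι R) :=
  {fg | ∀ u v, B (u ᵥ* fg.1) v = B u (v ᵥ* fg.2)}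

lemma swap_mem_adjointPairs {ι κ : Type*} [Fintype ι] {B : (ι → R) → (ι → R) → κ → R}
    (hB : ∀ u v, B u v = -B v u) {f g : Matrix ι ι R} (h : (f, g) ∈ adjointPairs B) :
    (g, f) ∈ adjointPairs B := fun u v => by
  rw [hB (u ᵥ* g), ← h v u, hB (v ᵥ* f), neg_neg]

section

variable {f g : Matrix (Fin d) (Fin d) R} (h : (f, g) ∈ adjointPairs consecutiveMinors)
include h

/-- The identity `B(e_a f, e_b)_k = B(e_a, e_b g)_k`. -/
lemma entry_relation_of_mem_adjointPairs (a b : Fin d) (k : ℕ) (hk : k + 1 < d) :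
    f a ⟨k, by omega⟩ * (if k + 1 = (b : ℕ) then 1 else 0)
        - f a ⟨k + 1, hk⟩ * (if k = (b : ℕ) then 1 else 0)
      = (if k = (a : ℕ) then 1 else 0) * g b ⟨k + 1, hk⟩
        - (if k + 1 = (a : ℕ) then 1 else 0) * g b ⟨k, by omega⟩ := by
  have := congrFun (h (Pi.single a 1) (Pi.single b 1)) ⟨k, by omega⟩
  simpa [consecutiveMinors, Pi.single_apply, Fin.ext_iff] using this

lemma diag_eq_diag_succ_of_mem_adjointPairs (k : ℕ) (hk : k + 1 < d) :
    f ⟨k, by omega⟩ ⟨k, by omega⟩ = g ⟨k + 1, hk⟩ ⟨k + 1, hk⟩ := by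
  simpa using entry_relation_of_mem_adjointPairs h ⟨k, by omega⟩ ⟨k + 1, hk⟩ k hk

lemma snd_one_zero_of_mem_adjointPairs (hd : 2 ≤ d) :
    g ⟨1, by omega⟩ ⟨0, by omega⟩ = -f ⟨1, by omega⟩ ⟨0, by omega⟩ := by
  have := entry_relation_of_mem_adjointPairs h ⟨1, by omega⟩ ⟨1, by omega⟩ 0 (by omega)
  simp only [zero_add, ↓reduceIte, mul_one, zero_ne_one, mul_zero, sub_zero, zero_mul, one_mul,
    zero_sub] at this
  linear_combination this

lemma snd_last_of_mem_adjointPairs (hd : 2 ≤ d) :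
    g ⟨d - 2, by omega⟩ ⟨d - 1, by omega⟩ = -f ⟨d - 2, by omega⟩ ⟨d - 1, by omega⟩ := by
  have :=
    entry_relation_of_mem_adjointPairs h ⟨d - 2, by omega⟩ ⟨d - 2, by omega⟩ (d - 2) (by omega)
  simp [show d - 2 + 1 = d - 1 by omega, show d - 1 ≠ d - 2 by omega] at this
  exact this.symm

lemma eq_zero_of_mem_adjointPairs (i j : ℕ) (hi : i < d) (hj : j < d) (hij : i ≠ j)
    (h10 : ¬(i = 1 ∧ j = 0)) (hlast : ¬(i = d - 2 ∧ j = d - 1)) :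
    f ⟨i, hi⟩ ⟨j, hj⟩ = 0 := by
  by_cases hup : j + 1 < d ∧ i ≠ j + 1
  · have := entry_relation_of_mem_adjointPairs h ⟨i, hi⟩ ⟨j + 1, hup.1⟩ j hup.1
    simpa [hup.2.symm, Ne.symm hij] using this
  · obtain ⟨k, rfl⟩ : ∃ k, j = k + 1 := ⟨j - 1, by omega⟩
    have := entry_relation_of_mem_adjointPairs h ⟨i, hi⟩ ⟨k, by omega⟩ k (by omega)
    simpa [show k ≠ i by omega, Ne.symm hij] using this

lemma diag_of_mem_adjointPairs (hd : 2 ≤ d) (m : ℕ) (hm : m < d) :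
    f ⟨m, hm⟩ ⟨m, hm⟩ =
        (if m % 2 = 0 then f ⟨0, by omega⟩ ⟨0, by omega⟩ else f ⟨1, by omega⟩ ⟨1, by omega⟩) ∧
      g ⟨m, hm⟩ ⟨m, hm⟩ =
        (if m % 2 = 0 then f ⟨1, by omega⟩ ⟨1, by omega⟩ else f ⟨0, by omega⟩ ⟨0, by omega⟩) := by
  have hswap := swap_mem_adjointPairs consecutiveMinors_swap h
  induction m with
  | zero => exact ⟨rfl, diag_eq_diag_succ_of_mem_adjointPairs hswap 0 hd⟩
  | succ n ih =>
    obtain ⟨hf, hg⟩ := ih (by omega)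
    rw [← diag_eq_diag_succ_of_mem_adjointPairs hswap n hm, hg,
      ← diag_eq_diag_succ_of_mem_adjointPairs h n hm, hf]
    constructor <;> split_ifs <;> first | rfl | omega

end

def typeAMatrix (hd : 2 ≤ d) (D : Fin d → R) (y z : R) : Matrix (Fin d) (Fin d) R :=
  diagonal D + y • single ⟨1, by omega⟩ ⟨0, by omega⟩ 1
    + z • single ⟨d - 2, by omega⟩ ⟨d - 1, by omega⟩ 1

/-- `(D(w,x) + y E₂₁ + z E_{d-1,d}, D(x,w) - y E₂₁ - z E_{d-1,d})` in the paper's 1-based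
notation. -/
def typeAPair (hd : 2 ≤ d) (w x y z : R) : Matrix (Fin d) (Fin d) R × Matrix (Fin d) (Fin d) R :=
  (typeAMatrix hd (fun i => if (i : ℕ) % 2 = 0 then w else x) y z,
    typeAMatrix hd (fun i => if (i : ℕ) % 2 = 0 then x else w) (-y) (-z))

lemma eq_typeAMatrix (hd : 2 ≤ d) {M : Matrix (Fin d) (Fin d) R}
    (hM : ∀ i j (hi : i < d) (hj : j < d), i ≠ j → ¬(i = 1 ∧ j = 0) → ¬(i = d - 2 ∧ j = d - 1) →
      M ⟨i, hi⟩ ⟨j, hj⟩ = 0) :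
    M = typeAMatrix hd (fun a => M a a) (M ⟨1, by omega⟩ ⟨0, by omega⟩)
      (M ⟨d - 2, by omega⟩ ⟨d - 1, by omega⟩) := by
  ext ⟨i, hi⟩ ⟨j, hj⟩
  simp only [typeAMatrix, Matrix.add_apply, Matrix.smul_apply, diagonal_apply, single_apply,
    Fin.ext_iff, smul_eq_mul, ite_and]
  split_ifs <;> simp only [mul_one, mul_zero, add_zero, zero_add] <;> first
    | omega
    | exact hM i j hi hj (by omega) (by omega) (by omega)
    | congr 1 <;> simp only [Fin.mk.injEq] <;> omega

section

variable (hd : 2 ≤ d)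

lemma typeAMatrix_entries (D : Fin d → R) (y z : R) :
    typeAMatrix hd D y z ⟨0, by omega⟩ ⟨0, by omega⟩ = D ⟨0, by omega⟩ ∧
      typeAMatrix hd D y z ⟨1, by omega⟩ ⟨1, by omega⟩ = D ⟨1, by omega⟩ ∧
      typeAMatrix hd D y z ⟨1, by omega⟩ ⟨0, by omega⟩ = y ∧
      typeAMatrix hd D y z ⟨d - 2, by omega⟩ ⟨d - 1, by omega⟩ = z := by
  simp [typeAMatrix, single_apply, show d - 1 ≠ 0 by omega, show d - 2 ≠ d - 1 by omega]
  exact ⟨by omega, by omega⟩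

lemma vecMul_typeAMatrix (D : Fin d → R) (y z : R) (u : Fin d → R) (m : Fin d) :
    (u ᵥ* typeAMatrix hd D y z) m = D m * u m
      + (if (m : ℕ) = 0 then y * u ⟨1, by omega⟩ else 0)
      + (if (m : ℕ) = d - 1 then z * u ⟨d - 2, by omega⟩ else 0) := by
  simp only [typeAMatrix, vecMul_add, vecMul_smul, vecMul_diagonal, Pi.add_apply, Pi.smul_apply,
    smul_eq_mul]
  simp only [vecMul, dotProduct, single_apply, ite_and, mul_ite, mul_zero, mul_one,
    Finset.sum_ite_eq, Finset.mem_univ, if_true]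
  simp [Fin.ext_iff, eq_comm (a := (m : ℕ)), mul_comm]

lemma typeAPair_mem_adjointPairs (w x y z : R) :
    typeAPair hd w x y z ∈ adjointPairs consecutiveMinors := by
  -- with `d = n + 2`, the boundary cases `k = 0` and `k = n` of the computation are substitutions
  obtain ⟨n, rfl⟩ : ∃ n, d = n + 2 := ⟨d - 2, by omega⟩
  intro u v
  funext ⟨k, hk⟩
  have hpar : (k + 1) % 2 = 0 ↔ ¬k % 2 = 0 := by omega
  simp only [typeAPair, consecutiveMinors, vecMul_typeAMatrix, hpar, ite_not,
    show k + 1 ≠ 0 by omega, show k ≠ n + 2 - 1 by omega, if_false, add_zero]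
  simp only [Nat.add_sub_cancel, show n + 2 - 1 = n + 1 by omega, Nat.add_right_cancel_iff]
  split_ifs <;> subst_vars <;> ring

end

lemma eq_typeAPair_of_mem_adjointPairs (hd : 2 ≤ d) {f g : Matrix (Fin d) (Fin d) R}
    (h : (f, g) ∈ adjointPairs consecutiveMinors) :
    (f, g) = typeAPair hd (f ⟨0, by omega⟩ ⟨0, by omega⟩) (f ⟨1, by omega⟩ ⟨1, by omega⟩)
      (f ⟨1, by omega⟩ ⟨0, by omega⟩) (f ⟨d - 2, by omega⟩ ⟨d - 1, by omega⟩) := by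
  have hswap := swap_mem_adjointPairs consecutiveMinors_swap h
  refine Prod.ext ((eq_typeAMatrix hd (eq_zero_of_mem_adjointPairs h)).trans ?_)
    ((eq_typeAMatrix hd (eq_zero_of_mem_adjointPairs hswap)).trans ?_)
  · congr 1
    funext ⟨m, hm⟩
    exact (diag_of_mem_adjointPairs h hd m hm).1
  · rw [snd_one_zero_of_mem_adjointPairs h hd, snd_last_of_mem_adjointPairs h hd]
    congr 1
    funext ⟨m, hm⟩
    exact (diag_of_mem_adjointPairs h hd m hm).2

theorem mem_adjointPairs_consecutiveMinors_iff (hd : 2 ≤ d)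
    {fg : Matrix (Fin d) (Fin d) R × Matrix (Fin d) (Fin d) R} :
    fg ∈ adjointPairs consecutiveMinors ↔ ∃ w x y z, fg = typeAPair hd w x y z := by
  refine ⟨fun h => ⟨_, _, _, _, eq_typeAPair_of_mem_adjointPairs hd h⟩, ?_⟩
  rintro ⟨w, x, y, z, rfl⟩
  exact typeAPair_mem_adjointPairs hd w x y z

lemma typeAPair_injective (hd : 2 ≤ d) :
    Function.Injective fun q : R × R × R × R => typeAPair hd q.1 q.2.1 q.2.2.1 q.2.2.2 := by
  rintro ⟨w, x, y, z⟩ ⟨w', x', y', z'⟩ h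
  have h1 : typeAMatrix hd _ y z = typeAMatrix hd _ y' z' := congrArg Prod.fst h
  obtain ⟨hw, hx, hy, hz⟩ :=
    typeAMatrix_entries hd (fun i : Fin d => if (i : ℕ) % 2 = 0 then w else x) y z
  obtain ⟨hw', hx', hy', hz'⟩ :=
    typeAMatrix_entries hd (fun i : Fin d => if (i : ℕ) % 2 = 0 then w' else x') y' z'
  rw [h1] at hw hx hy hz
  norm_num at hw hx hw' hx'
  simp only [Prod.mk.injEq]
  exact ⟨hw.symm.trans hw', hx.symm.trans hx', hy.symm.trans hy', hz.symm.trans hz'⟩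

theorem card_adjointPairs_consecutiveMinors (hd : 2 ≤ d) :
    Nat.card (adjointPairs (consecutiveMinors (R := R) (d := d))) = Nat.card R ^ 4 := by
  have : adjointPairs (consecutiveMinors (R := R) (d := d)) =
      Set.range fun q : R × R × R × R => typeAPair hd q.1 q.2.1 q.2.2.1 q.2.2.2 := by
    ext fg
    simp [mem_adjointPairs_consecutiveMinors_iff hd, eq_comm]
  rw [this, Nat.card_range_of_injective (typeAPair_injective hd)]
  simp only [Nat.card_prod]
  ring

end

/-- Let `p` be a prime, `d ≥ 3`, and let
`B : ℤₚᵈ × ℤₚᵈ → ℤₚ^{d−1}`, `B(u,v)_k = u_k v_{k+1} − u_{k+1} v_k` (indices `1`-based in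
the paper, `0`-based here).  Matrices act on row vectors on the right, and `(f, g)` is an
adjoint pair when `B(u f, v) = B(u, v g)` for all `u, v`.  Then `Adj(B)` consists exactly
of the pairs `(D(w,x) + y·E_{21} + z·E_{d−1,d}, D(x,w) − y·E_{21} − z·E_{d−1,d})` with
`w, x, y, z ∈ ℤₚ`, where `D(w,x)` is the diagonal matrix with alternating diagonal
`(w,x,w,x,…)` and `E_{ij}` is a matrix unit (here in `0`-based indexing `E_{21} = E 1 0`
and `E_{d−1,d} = E (d−2) (d−1)`).  In particular `Adj(B)` has exactly `p⁴` elements,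
i.e. it is `4`-dimensional over `ℤₚ`. -/
theorem adjoint_ring_typeA (p d : ℕ) (hd : 3 ≤ d)
    (B : (Fin d → ZMod p) → (Fin d → ZMod p) → (Fin (d - 1) → ZMod p))
    (hB : ∀ u v : Fin d → ZMod p, ∀ k : Fin (d - 1),
      B u v k = u ⟨(k : ℕ), by have := k.isLt; omega⟩ * v ⟨(k : ℕ) + 1, by have := k.isLt; omega⟩
        - u ⟨(k : ℕ) + 1, by have := k.isLt; omega⟩ * v ⟨(k : ℕ), by have := k.isLt; omega⟩) :
    {fg : Matrix (Fin d) (Fin d) (ZMod p) × Matrix (Fin d) (Fin d) (ZMod p) |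
        ∀ u v : Fin d → ZMod p, B (u ᵥ* fg.1) v = B u (v ᵥ* fg.2)} =
      {fg | ∃ w x y z : ZMod p,
        fg.1 = Matrix.diagonal (fun i : Fin d => if (i : ℕ) % 2 = 0 then w else x)
          + y • Matrix.single ⟨1, by omega⟩ ⟨0, by omega⟩ 1
          + z • Matrix.single ⟨d - 2, by omega⟩ ⟨d - 1, by omega⟩ 1 ∧
        fg.2 = Matrix.diagonal (fun i : Fin d => if (i : ℕ) % 2 = 0 then x else w)
          - y • Matrix.single ⟨1, by omega⟩ ⟨0, by omega⟩ 1
          - z • Matrix.single ⟨d - 2, by omega⟩ ⟨d - 1, by omega⟩ 1} ∧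
    Nat.card {fg : Matrix (Fin d) (Fin d) (ZMod p) × Matrix (Fin d) (Fin d) (ZMod p) //
        ∀ u v : Fin d → ZMod p, B (u ᵥ* fg.1) v = B u (v ᵥ* fg.2)} = p ^ 4 := by
  obtain rfl : B = consecutiveMinors := funext fun u => funext fun v => funext (hB u v)
  refine ⟨Set.ext fun fg => (mem_adjointPairs_consecutiveMinors_iff (by omega)).trans ?_,
    (card_adjointPairs_consecutiveMinors (by omega)).trans (by rw [Nat.card_zmod])⟩
  simp only [Prod.ext_iff, typeAPair, typeAMatrix, neg_smul, ← sub_eq_add_neg]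
  rfl
end

section
/- Let p be a prime, d ≥ 4, and let B_D : Z_p^d × Z_p^d → Z_p^{d−1} be the bilinear map with B_D(u, v)_k = u_k v_{k+1} − u_{k+1} v_k for 1 ≤ k ≤ d − 2 and B_D(u, v)_{d−1} = u_{d−2} v_d − u_d v_{d−2}. Then Adj(B_D) = {(D′(v, w) + Q(x, y, z), D′(w, v) − Q(x, y, z)) : v, w, x, y, z ∈ Z_p}, where Q(x, y, z) = x·E_{21} + y·E_{d−2,d−1} + z·E_{d−2,d} and D′(v, w) is the diagonal matrix whose first d − 1 diagonal entries alternate (v, w, v, w, …) starting with v and whose d-th diagonal entry equals its (d−1)-st diagonal entry. In particular Adj(B_D) is a 5-dimensional Z_p-vector space. -/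
/-!
The `k`-th coordinate of `B_D` is the alternating form `u_a v_b - u_b v_a` along the `k`-th edge
`{a, b}` of the Dynkin diagram `D_d`, so `(f, g)` is adjoint for `B_D` iff it is adjoint for each
of these edge forms. Testing one edge form on unit vectors shows that columns `a` and `b` of `f`
and `g` vanish off `{a, b}`, that `f_aa = g_bb`, and that `f_ba = -g_ba`. Hence `g = -f` off the
diagonal (every vertex lies on an edge); a column of `f` can have an off-diagonal entry only at a
leaf, in the row of its unique neighbour, which leaves the three entries `x, y, z` at the leaves
`0, d-2, d-1`; and `f_aa = g_bb` propagates along the tree, making the diagonals of `f` and `g`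
constant, with swapped values `v, w`, on the two colour classes of its bipartition. Conversely
each of the five resulting generators is adjoint for every edge form.
-/

open Matrix

section EdgeForm

variable {ι R : Type*} [Fintype ι] [CommRing R]

def edgeForm (a b : ι) (u v : ι → R) : R := u a * v b - u b * v a

def IsAdjointPairFor {M : Type*} (β : (ι → R) → (ι → R) → M) (f g : Matrix ι ι R) : Prop :=
  ∀ u v, β (u ᵥ* f) v = β u (v ᵥ* g)

variable {a b : ι} {f g f' g' : Matrix ι ι R}

theorem isAdjointPairFor_pi_iff {κ : Type*} {β : (ι → R) → (ι → R) → κ → R} :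
    IsAdjointPairFor β f g ↔ ∀ k, IsAdjointPairFor (fun u v => β u v k) f g := by
  simp only [IsAdjointPairFor, funext_iff]
  exact ⟨fun h k u v => h u v k, fun h u v k => h k u v⟩

theorem isAdjointPairFor_edgeForm_comm :
    IsAdjointPairFor (edgeForm b a) f g ↔ IsAdjointPairFor (edgeForm a b) f g := by
  refine forall₂_congr fun u v => ?_
  unfold edgeForm
  constructor <;> intro h <;> linear_combination -h

theorem IsAdjointPairFor.add (h : IsAdjointPairFor (edgeForm a b) f g)
    (h' : IsAdjointPairFor (edgeForm a b) f' g') :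
    IsAdjointPairFor (edgeForm a b) (f + f') (g + g') := by
  intro u v
  have h₁ := h u v
  have h₂ := h' u v
  simp only [edgeForm, vecMul_add, Pi.add_apply] at *
  linear_combination h₁ + h₂

variable [DecidableEq ι]

theorem isAdjointPairFor_edgeForm_diagonal {D D' : ι → R} (ha : D a = D' b) (hb : D b = D' a) :
    IsAdjointPairFor (edgeForm a b) (diagonal D) (diagonal D') := by
  intro u v
  simp only [edgeForm, vecMul_diagonal, ha, hb]
  ring

theorem Matrix.vecMul_single (u : ι → R) (i j : ι) (x : R) :
    u ᵥ* single i j x = Pi.single j (u i * x) := by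
  ext c
  by_cases h : j = c
  · subst h
    simp [vecMul, dotProduct, single_apply]
  · simp [vecMul, dotProduct, h, Ne.symm h]

theorem isAdjointPairFor_edgeForm_single {i j : ι} (x : R)
    (h : (j ≠ a ∧ j ≠ b) ∨ (i = a ∧ j = b) ∨ (i = b ∧ j = a)) :
    IsAdjointPairFor (edgeForm a b) (single i j x) (-single i j x) := by
  have hedge : ∀ a b : ι, IsAdjointPairFor (edgeForm a b) (single a b x) (-single a b x) := by
    intro a b u v
    by_cases hab : a = b
    · simp [edgeForm, hab]
    · simp only [edgeForm, vecMul_single, vecMul_neg, Pi.neg_apply, Pi.single_eq_same,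
        Pi.single_eq_of_ne hab]
      ring
  rcases h with ⟨ha, hb⟩ | ⟨rfl, rfl⟩ | ⟨rfl, rfl⟩
  · intro u v
    simp [edgeForm, vecMul_single, vecMul_neg, ha, hb]
  · exact hedge i j
  · exact isAdjointPairFor_edgeForm_comm.1 (hedge i j)

theorem IsAdjointPairFor.left_apply_eq_zero (h : IsAdjointPairFor (edgeForm a b) f g)
    (hab : a ≠ b) {i : ι} (hia : i ≠ a) (hib : i ≠ b) : f i a = 0 := by
  simpa [edgeForm, single_one_vecMul, hia, hib, hab.symm] using h (Pi.single i 1) (Pi.single b 1)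

theorem IsAdjointPairFor.right_apply_eq_zero (h : IsAdjointPairFor (edgeForm a b) f g)
    (hab : a ≠ b) {j : ι} (hja : j ≠ a) (hjb : j ≠ b) : g j a = 0 := by
  simpa [edgeForm, single_one_vecMul, hja, hjb, hab, hab.symm] using
    h (Pi.single b 1) (Pi.single j 1)

theorem IsAdjointPairFor.left_apply_self (h : IsAdjointPairFor (edgeForm a b) f g)
    (hab : a ≠ b) : f a a = g b b := by
  simpa [edgeForm, single_one_vecMul, hab, hab.symm] using h (Pi.single a 1) (Pi.single b 1)

theorem IsAdjointPairFor.left_apply_eq_neg_right (h : IsAdjointPairFor (edgeForm a b) f g)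
    (hab : a ≠ b) : f b a = -g b a := by
  simpa [edgeForm, single_one_vecMul, hab, hab.symm] using h (Pi.single b 1) (Pi.single b 1)

theorem IsAdjointPairFor.right_apply_eq_neg_left (h : IsAdjointPairFor (edgeForm a b) f g)
    (hab : a ≠ b) {i : ι} (hia : i ≠ a) : g i a = -f i a := by
  by_cases hib : i = b
  · rw [hib, h.left_apply_eq_neg_right hab, neg_neg]
  · rw [h.left_apply_eq_zero hab hia hib, h.right_apply_eq_zero hab hia hib, neg_zero]

end EdgeForm

section TypeD

variable {R : Type*} {d : ℕ} {a b : Fin d}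

/-- The edges of the Dynkin diagram `D_d` (0-based): the path `0 - 1 - ⋯ - (d-2)` and the fork
`(d-3) - (d-1)`. -/
def IsTypeDEdge (a b : Fin d) : Prop :=
  (a.val + 1 = b.val ∧ b.val ≤ d - 2) ∨ (a.val = d - 3 ∧ b.val = d - 1)

def typeDEdge (k : Fin (d - 1)) : Fin d × Fin d :=
  if h : (k : ℕ) < d - 2 then (⟨k, by omega⟩, ⟨k + 1, by omega⟩)
  else (⟨d - 3, by omega⟩, ⟨d - 1, by omega⟩)

/-- The diagonal of the paper's `D′(v, w)`. -/
def typeDDiag (v w : R) (i : Fin d) : R := if min (i : ℕ) (d - 2) % 2 = 0 then v else w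

theorem IsTypeDEdge.ne (hd : 4 ≤ d) (h : IsTypeDEdge a b) : a ≠ b := by
  unfold IsTypeDEdge at h
  rw [Ne, Fin.ext_iff]
  omega

theorem IsTypeDEdge.typeDDiag_swap (hd : 4 ≤ d) (h : IsTypeDEdge a b) (v w : R) :
    typeDDiag w v a = typeDDiag v w b := by
  unfold IsTypeDEdge at h
  unfold typeDDiag
  split_ifs <;> first | rfl | (exfalso; omega)

theorem exists_isTypeDEdge (hd : 4 ≤ d) (c : Fin d) : ∃ b, IsTypeDEdge c b ∨ IsTypeDEdge b c := by
  by_cases hc : c.val ≤ d - 3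
  · exact ⟨⟨c + 1, by omega⟩, Or.inl (Or.inl ⟨rfl, by dsimp only; omega⟩)⟩
  · exact ⟨⟨d - 3, by omega⟩, Or.inr (by unfold IsTypeDEdge; dsimp only; omega)⟩

variable [CommRing R]

/-- The paper's `Q(x, y, z)`. -/
def typeDOffDiag (hd : 4 ≤ d) (x y z : R) : Matrix (Fin d) (Fin d) R :=
  x • single ⟨1, lt_of_lt_of_le (by norm_num) hd⟩ ⟨0, Nat.zero_lt_of_lt hd⟩ 1
    + y • single ⟨d - 3, Nat.sub_lt (Nat.zero_lt_of_lt hd) three_pos⟩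
        ⟨d - 2, Nat.sub_lt (Nat.zero_lt_of_lt hd) two_pos⟩ 1
    + z • single ⟨d - 3, Nat.sub_lt (Nat.zero_lt_of_lt hd) three_pos⟩
        ⟨d - 1, Nat.sub_lt (Nat.zero_lt_of_lt hd) one_pos⟩ 1

theorem typeDOffDiag_apply (hd : 4 ≤ d) (x y z : R) {i c : ℕ} (hi : i < d) (hc : c < d) :
    typeDOffDiag hd x y z ⟨i, hi⟩ ⟨c, hc⟩ =
      if i = 1 ∧ c = 0 then x else if i = d - 3 ∧ c = d - 2 then y
      else if i = d - 3 ∧ c = d - 1 then z else 0 := by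
  simp only [typeDOffDiag, Matrix.add_apply, Matrix.smul_apply, single_apply, Fin.mk.injEq,
    smul_eq_mul]
  split_ifs <;> first | omega | simp

theorem typeDOffDiag_apply_self (hd : 4 ≤ d) (x y z : R) (c : Fin d) :
    typeDOffDiag hd x y z c c = 0 := by
  rw [typeDOffDiag_apply hd x y z c.isLt c.isLt, if_neg (by omega), if_neg (by omega),
    if_neg (by omega)]

theorem IsTypeDEdge.isAdjointPairFor_typeD (hd : 4 ≤ d) (hab : IsTypeDEdge a b)
    (v w x y z : R) :
    IsAdjointPairFor (edgeForm a b)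
      (diagonal (typeDDiag v w) + typeDOffDiag hd x y z)
      (diagonal (typeDDiag w v) - typeDOffDiag hd x y z) := by
  simp only [sub_eq_add_neg, typeDOffDiag, neg_add, smul_single, smul_eq_mul, mul_one]
  refine (isAdjointPairFor_edgeForm_diagonal (hab.typeDDiag_swap hd w v)
    (hab.typeDDiag_swap hd v w).symm).add
      (((isAdjointPairFor_edgeForm_single _ ?_).add (isAdjointPairFor_edgeForm_single _ ?_)).add
        (isAdjointPairFor_edgeForm_single _ ?_)) <;>
  · unfold IsTypeDEdge at hab
    simp only [ne_eq, Fin.ext_iff]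
    omega

variable {f g : Matrix (Fin d) (Fin d) R}

def IsTypeDAdjointPair (f g : Matrix (Fin d) (Fin d) R) : Prop :=
  ∀ a b, IsTypeDEdge a b → IsAdjointPairFor (edgeForm a b) f g

theorem isTypeDAdjointPair_iff_forall_typeDEdge (hd : 4 ≤ d) :
    IsTypeDAdjointPair f g ↔
      ∀ k, IsAdjointPairFor (edgeForm (typeDEdge k).1 (typeDEdge k).2) f g := by
  constructor
  · intro h k
    unfold typeDEdge
    split_ifs with hk
    · exact h _ _ (Or.inl ⟨rfl, by dsimp only; omega⟩)
    · exact h _ _ (Or.inr ⟨rfl, rfl⟩)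
  · rintro h ⟨a, ha⟩ ⟨b, hb⟩ hab
    simp only [IsTypeDEdge] at hab
    rcases hab with ⟨rfl, hb'⟩ | ⟨rfl, rfl⟩
    · simpa [typeDEdge, show a < d - 2 by omega] using h ⟨a, by omega⟩
    · simpa [typeDEdge] using h ⟨d - 2, by omega⟩

namespace IsTypeDAdjointPair

theorem isAdjointPairFor_edgeForm (h : IsTypeDAdjointPair f g)
    (hab : IsTypeDEdge a b ∨ IsTypeDEdge b a) :
    IsAdjointPairFor (_root_.edgeForm a b) f g :=
  hab.elim (h a b) fun hba => isAdjointPairFor_edgeForm_comm.2 (h b a hba)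

theorem exists_apply_self (hd : 4 ≤ d) (h : IsTypeDAdjointPair f g) :
    ∃ v w : R, ∀ c, f c c = typeDDiag v w c ∧ g c c = typeDDiag w v c := by
  set v := f ⟨0, by omega⟩ ⟨0, by omega⟩
  set w := f ⟨1, by omega⟩ ⟨1, by omega⟩
  refine ⟨v, w, ?_⟩
  have step : ∀ a b, IsTypeDEdge a b →
      f a a = typeDDiag v w a ∧ g a a = typeDDiag w v a →
      f b b = typeDDiag v w b ∧ g b b = typeDDiag w v b := by
    rintro a b hab ⟨hfa, hga⟩
    constructor
    · rw [(h.isAdjointPairFor_edgeForm (Or.inr hab)).left_apply_self (hab.ne hd).symm, hga,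
        hab.typeDDiag_swap hd]
    · rw [← (h a b hab).left_apply_self (hab.ne hd), hfa, hab.typeDDiag_swap hd]
  have path : ∀ n (hn : n ≤ d - 2),
      f ⟨n, by omega⟩ ⟨n, by omega⟩ = typeDDiag v w (⟨n, by omega⟩ : Fin d) ∧
        g ⟨n, by omega⟩ ⟨n, by omega⟩ = typeDDiag w v (⟨n, by omega⟩ : Fin d) := by
    intro n hn
    induction n with
    | zero =>
      have h01 : IsTypeDEdge (⟨0, by omega⟩ : Fin d) ⟨1, by omega⟩ :=
        Or.inl ⟨rfl, by dsimp only; omega⟩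
      refine ⟨by simp [typeDDiag, v], ?_⟩
      rw [← (h.isAdjointPairFor_edgeForm (Or.inr h01)).left_apply_self (h01.ne hd).symm]
      simp [typeDDiag, w]
    | succ n ih => exact step _ _ (Or.inl ⟨rfl, hn⟩) (ih (by omega))
  rintro ⟨c, hc⟩
  by_cases hcd : c ≤ d - 2
  · exact path c hcd
  · obtain rfl : c = d - 1 := by omega
    exact step ⟨d - 3, by omega⟩ _ (Or.inr ⟨rfl, rfl⟩) (path (d - 3) (by omega))

theorem apply_eq_zero (h : IsTypeDAdjointPair f g) {i c : ℕ} (hi : i < d) (hc : c < d)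
    (hic : i ≠ c) (hx : ¬(i = 1 ∧ c = 0)) (hy : ¬(i = d - 3 ∧ c = d - 2))
    (hz : ¬(i = d - 3 ∧ c = d - 1)) :
    f ⟨i, hi⟩ ⟨c, hc⟩ = 0 := by
  obtain ⟨b, hb, hcb, hib⟩ : ∃ b, ∃ hb : b < d,
      (IsTypeDEdge ⟨c, hc⟩ ⟨b, hb⟩ ∨ IsTypeDEdge ⟨b, hb⟩ ⟨c, hc⟩) ∧ i ≠ b := by
    simp only [IsTypeDEdge]
    by_cases h0 : c = 0
    · exact ⟨1, by omega, by omega, by omega⟩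
    by_cases h1 : d - 2 ≤ c
    · exact ⟨d - 3, by omega, by omega, by omega⟩
    by_cases h2 : i = c + 1
    · exact ⟨c - 1, by omega, by omega, by omega⟩
    · exact ⟨c + 1, by omega, by omega, by omega⟩
  refine (h.isAdjointPairFor_edgeForm hcb).left_apply_eq_zero ?_ ?_ ?_ <;>
  · simp only [IsTypeDEdge] at hcb
    simp only [ne_eq, Fin.ext_iff]
    omega

theorem right_apply_eq_neg_left (hd : 4 ≤ d) (h : IsTypeDAdjointPair f g) {i c : Fin d}
    (hic : i ≠ c) : g i c = -f i c := by
  obtain ⟨b, hb⟩ := exists_isTypeDEdge hd c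
  exact (h.isAdjointPairFor_edgeForm hb).right_apply_eq_neg_left
    (hb.elim (·.ne hd) fun hbc => (hbc.ne hd).symm) hic

theorem exists_eq (hd : 4 ≤ d) (h : IsTypeDAdjointPair f g) :
    ∃ v w x y z : R, f = diagonal (typeDDiag v w) + typeDOffDiag hd x y z ∧
      g = diagonal (typeDDiag w v) - typeDOffDiag hd x y z := by
  obtain ⟨v, w, hdiag⟩ := h.exists_apply_self hd
  have hf : f = diagonal (typeDDiag v w) + typeDOffDiag hd (f ⟨1, by omega⟩ ⟨0, by omega⟩)
      (f ⟨d - 3, by omega⟩ ⟨d - 2, by omega⟩) (f ⟨d - 3, by omega⟩ ⟨d - 1, by omega⟩) := by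
    ext ⟨i, hi⟩ ⟨c, hc⟩
    rw [Matrix.add_apply, typeDOffDiag_apply]
    by_cases hic : i = c
    · subst hic
      rw [diagonal_apply_eq, if_neg (by omega), if_neg (by omega), if_neg (by omega), add_zero]
      exact (hdiag _).1
    · rw [diagonal_apply_ne _ (by simpa [Fin.ext_iff] using hic), zero_add]
      split_ifs with hx hy hz
      · obtain ⟨rfl, rfl⟩ := hx; rfl
      · obtain ⟨rfl, rfl⟩ := hy; rfl
      · obtain ⟨rfl, rfl⟩ := hz; rfl
      · exact h.apply_eq_zero hi hc hic hx hy hz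
  refine ⟨v, w, _, _, _, hf, ?_⟩
  ext i c
  rw [Matrix.sub_apply]
  by_cases hic : i = c
  · subst hic
    rw [diagonal_apply_eq, typeDOffDiag_apply_self, sub_zero, (hdiag i).2]
  · rw [diagonal_apply_ne _ hic, zero_sub, h.right_apply_eq_neg_left hd hic]
    conv_lhs => rw [hf]
    rw [Matrix.add_apply, diagonal_apply_ne _ hic, zero_add]

end IsTypeDAdjointPair

theorem isTypeDAdjointPair_iff (hd : 4 ≤ d) :
    IsTypeDAdjointPair f g ↔ ∃ v w x y z : R,
      f = diagonal (typeDDiag v w) + typeDOffDiag hd x y z ∧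
        g = diagonal (typeDDiag w v) - typeDOffDiag hd x y z := by
  refine ⟨IsTypeDAdjointPair.exists_eq hd, ?_⟩
  rintro ⟨v, w, x, y, z, rfl, rfl⟩ a b hab
  exact hab.isAdjointPairFor_typeD hd v w x y z

def typeDAdjointPair (hd : 4 ≤ d) (q : R × R × R × R × R) :
    Matrix (Fin d) (Fin d) R × Matrix (Fin d) (Fin d) R :=
  (diagonal (typeDDiag q.1 q.2.1) + typeDOffDiag hd q.2.2.1 q.2.2.2.1 q.2.2.2.2,
    diagonal (typeDDiag q.2.1 q.1) - typeDOffDiag hd q.2.2.1 q.2.2.2.1 q.2.2.2.2)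

theorem typeDAdjointPair_injective (hd : 4 ≤ d) :
    Function.Injective (typeDAdjointPair (R := R) hd) := by
  rintro ⟨v, w, x, y, z⟩ ⟨v', w', x', y', z'⟩ h
  have entry : ∀ i c (hi : i < d) (hc : c < d),
      (typeDAdjointPair hd (v, w, x, y, z)).1 ⟨i, hi⟩ ⟨c, hc⟩ =
        (typeDAdjointPair hd (v', w', x', y', z')).1 ⟨i, hi⟩ ⟨c, hc⟩ :=
    fun i c hi hc => congrFun (congrFun (congrArg Prod.fst h) ⟨i, hi⟩) ⟨c, hc⟩
  have h00 := entry 0 0 (by omega) (by omega)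
  have h11 := entry 1 1 (by omega) (by omega)
  have h10 := entry 1 0 (by omega) (by omega)
  have hy := entry (d - 3) (d - 2) (by omega) (by omega)
  have hz := entry (d - 3) (d - 1) (by omega) (by omega)
  simp (disch := omega) only [typeDAdjointPair, Matrix.add_apply, diagonal_apply,
    typeDOffDiag_apply, typeDDiag, Fin.mk.injEq, if_pos, if_neg, add_zero, zero_add, and_self,
    if_true] at h00 h11 h10 hy hz
  rw [h00, h11, h10, hy, hz]

end TypeD

/-- Let `p` be a prime, `d ≥ 4`, and let `B_D` be the type-`D`
bilinear map `ℤₚᵈ × ℤₚᵈ → ℤₚ^{d−1}` given by `B_D(u,v)_k = u_k v_{k+1} − u_{k+1} v_k` for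
`1 ≤ k ≤ d−2` and `B_D(u,v)_{d−1} = u_{d−2} v_d − u_d v_{d−2}` (the paper's indices are
`1`-based; here they are `0`-based).  Then `Adj(B_D)` consists exactly of the pairs
`(D′(v,w) + Q(x,y,z), D′(w,v) − Q(x,y,z))` with `v, w, x, y, z ∈ ℤₚ`, where
`Q(x,y,z) = x·E_{21} + y·E_{d−2,d−1} + z·E_{d−2,d}` and `D′(v,w)` is the diagonal matrix
whose first `d−1` diagonal entries alternate `(v,w,v,w,…)` starting with `v` and whose
`d`-th diagonal entry equals its `(d−1)`-st one.  In particular `Adj(B_D)` has exactly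
`p⁵` elements, i.e. it is `5`-dimensional over `ℤₚ`. -/
theorem adjoint_ring_typeD (p d : ℕ) (hd : 4 ≤ d)
    (B : (Fin d → ZMod p) → (Fin d → ZMod p) → (Fin (d - 1) → ZMod p))
    (hB : ∀ u v : Fin d → ZMod p, ∀ k : Fin (d - 1),
      B u v k =
        if (k : ℕ) < d - 2 then
          u ⟨(k : ℕ), by have := k.isLt; omega⟩ * v ⟨(k : ℕ) + 1, by have := k.isLt; omega⟩
            - u ⟨(k : ℕ) + 1, by have := k.isLt; omega⟩ * v ⟨(k : ℕ), by have := k.isLt; omega⟩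
        else
          u ⟨d - 3, by omega⟩ * v ⟨d - 1, by omega⟩
            - u ⟨d - 1, by omega⟩ * v ⟨d - 3, by omega⟩) :
    {fg : Matrix (Fin d) (Fin d) (ZMod p) × Matrix (Fin d) (Fin d) (ZMod p) |
        ∀ u v : Fin d → ZMod p, B (u ᵥ* fg.1) v = B u (v ᵥ* fg.2)} =
      {fg | ∃ v w x y z : ZMod p,
        fg.1 = Matrix.diagonal
            (fun i : Fin d => if (min (i : ℕ) (d - 2)) % 2 = 0 then v else w)
          + (x • Matrix.single ⟨1, by omega⟩ ⟨0, by omega⟩ 1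
            + y • Matrix.single ⟨d - 3, by omega⟩ ⟨d - 2, by omega⟩ 1
            + z • Matrix.single ⟨d - 3, by omega⟩ ⟨d - 1, by omega⟩ 1) ∧
        fg.2 = Matrix.diagonal
            (fun i : Fin d => if (min (i : ℕ) (d - 2)) % 2 = 0 then w else v)
          - (x • Matrix.single ⟨1, by omega⟩ ⟨0, by omega⟩ 1
            + y • Matrix.single ⟨d - 3, by omega⟩ ⟨d - 2, by omega⟩ 1
            + z • Matrix.single ⟨d - 3, by omega⟩ ⟨d - 1, by omega⟩ 1)} ∧
    Nat.card {fg : Matrix (Fin d) (Fin d) (ZMod p) × Matrix (Fin d) (Fin d) (ZMod p) //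
        ∀ u v : Fin d → ZMod p, B (u ᵥ* fg.1) v = B u (v ᵥ* fg.2)} = p ^ 5 := by
  have hB' : B = fun u v k => edgeForm (typeDEdge k).1 (typeDEdge k).2 u v := by
    funext u v k
    rw [hB]
    unfold typeDEdge
    split_ifs <;> rfl
  have hchar : ∀ fg : Matrix (Fin d) (Fin d) (ZMod p) × Matrix (Fin d) (Fin d) (ZMod p),
      IsAdjointPairFor B fg.1 fg.2 ↔ ∃ v w x y z : ZMod p,
        fg.1 = diagonal (typeDDiag v w) + typeDOffDiag hd x y z ∧
          fg.2 = diagonal (typeDDiag w v) - typeDOffDiag hd x y z :=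
    fun fg => hB' ▸ isAdjointPairFor_pi_iff.trans
      ((isTypeDAdjointPair_iff_forall_typeDEdge hd).symm.trans (isTypeDAdjointPair_iff hd))
  have hrange : ∀ fg, IsAdjointPairFor B fg.1 fg.2 ↔ fg ∈ Set.range (typeDAdjointPair hd) :=
    fun fg => (hchar fg).trans <| by
      simp only [Set.mem_range, Prod.exists, typeDAdjointPair, Prod.ext_iff, eq_comm]
  refine ⟨Set.ext hchar, ?_⟩
  calc _ = Nat.card (Set.range (typeDAdjointPair (R := ZMod p) hd)) :=
        Nat.card_congr (Equiv.subtypeEquivRight hrange)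
    _ = Nat.card (ZMod p × ZMod p × ZMod p × ZMod p × ZMod p) :=
        Nat.card_range_of_injective (typeDAdjointPair_injective hd)
    _ = p ^ 5 := by simp only [Nat.card_prod, Nat.card_zmod]; ring
end
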